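/- arXiv:2101.05113 — 2 statements merged into one kernel-verified Lean document; each statement's English description precedes it below -/
import Mathlib

section
/- Let X ∈ ℝ^{n₁×r} and Y ∈ ℝ^{n₂×r}. If ‖Y − Y⋆‖ ≤ σ₁(Y⋆)/4, then ‖(XYᵀ − M⋆)Y‖_F ≤ (3/2)σ₁(Y⋆)·(‖(X − X⋆)Yᵀ‖_F + ‖X(Y − Y⋆)ᵀ‖_F + ‖X − X⋆‖_F·‖Y − Y⋆‖_F). Similarly, if ‖X − X⋆‖ ≤ σ₁(X⋆)/4, then ‖(XYᵀ − M⋆)ᵀX‖_F ≤ (3/2)σ₁(X⋆)·(‖(X − X⋆)Yᵀ‖_F + ‖X(Y − Y⋆)ᵀ‖_F + ‖X − X⋆‖_F·‖Y − Y⋆‖_F). -/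
open Matrix BigOperators

/-- Frobenius norm of a real matrix. -/
noncomputable def frobNorm {m n : ℕ} (A : Matrix (Fin m) (Fin n) ℝ) : ℝ :=
  Real.sqrt (∑ i, ∑ j, (A i j) ^ 2)

/-- Spectral norm (largest singular value) of a real matrix. -/
noncomputable def specNorm {m n : ℕ} (A : Matrix (Fin m) (Fin n) ℝ) : ℝ :=
  ‖LinearMap.toContinuousLinearMap (Matrix.toEuclideanLin A)‖

/-- Smallest singular value of a matrix with `r` columns (the `r`-th largest singular value). -/
noncomputable def sigmaMinCol {m r : ℕ} (A : Matrix (Fin m) (Fin r) ℝ) : ℝ :=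
  sInf { s | ∃ v : EuclideanSpace ℝ (Fin r), ‖v‖ = 1 ∧ s = ‖Matrix.toEuclideanLin A v‖ }

/-- Matrix inner product `⟨A, B⟩ = Tr(Bᵀ A)`. -/
noncomputable def matInner {m n : ℕ} (A B : Matrix (Fin m) (Fin n) ℝ) : ℝ :=
  Matrix.trace (Bᵀ * A)

/-- Euclidean norm on `ℝ^m`. -/
noncomputable def vec2Norm {m : ℕ} (y : Fin m → ℝ) : ℝ :=
  Real.sqrt (∑ i, (y i) ^ 2)

/-- The sensing operator `𝒜(M) = (⟨A_i, M⟩)_{i=1..m}`. -/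
noncomputable def senseOp {n₁ n₂ m : ℕ} (As : Fin m → Matrix (Fin n₁) (Fin n₂) ℝ)
    (M : Matrix (Fin n₁) (Fin n₂) ℝ) : Fin m → ℝ :=
  fun i => matInner (As i) M

/-- The adjoint operator `𝒜*(y) = ∑ i, y i • A i`. -/
noncomputable def senseAdj {n₁ n₂ m : ℕ} (As : Fin m → Matrix (Fin n₁) (Fin n₂) ℝ)
    (y : Fin m → ℝ) : Matrix (Fin n₁) (Fin n₂) ℝ :=
  ∑ i, y i • As i

/-- Rank-`k` restricted isometry property with constant `δ`. -/
def HasRIP {n₁ n₂ m : ℕ} (As : Fin m → Matrix (Fin n₁) (Fin n₂) ℝ) (k : ℕ) (δ : ℝ) : Prop :=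
  0 ≤ δ ∧ δ < 1 ∧
  ∀ M : Matrix (Fin n₁) (Fin n₂) ℝ, M.rank ≤ k →
    (1 - δ) * (frobNorm M) ^ 2 ≤ (vec2Norm (senseOp As M)) ^ 2 ∧
    (vec2Norm (senseOp As M)) ^ 2 ≤ (1 + δ) * (frobNorm M) ^ 2

/-- dist(Z, Z⋆): infimum over invertible `P` of
`sqrt(‖XP − X⋆‖_F² + ‖YP⁻ᵀ − Y⋆‖_F²)`. -/
noncomputable def distZ {n₁ n₂ r : ℕ} (X Xs : Matrix (Fin n₁) (Fin r) ℝ)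
    (Y Ys : Matrix (Fin n₂) (Fin r) ℝ) : ℝ :=
  sInf { v | ∃ P : Matrix (Fin r) (Fin r) ℝ, IsUnit P ∧
    v = Real.sqrt ((frobNorm (X * P - Xs)) ^ 2 + (frobNorm (Y * (P⁻¹)ᵀ - Ys)) ^ 2) }

/-!
Writing `M⋆ = X⋆Y⋆ᵀ` with the balanced factors, the residual splits as
`XYᵀ − X⋆Y⋆ᵀ = (X − X⋆)Yᵀ + X(Y − Y⋆)ᵀ − (X − X⋆)(Y − Y⋆)ᵀ`, so its Frobenius norm is at most the
bracket on the right. Multiplying by `Y` costs a factor `‖Y‖ ≤ ‖Y⋆‖ + ‖Y − Y⋆‖ ≤ (5/4)‖Y⋆‖`,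
using `‖AB‖_F ≤ ‖A‖_F ‖B‖`; the second bound is the first one for the transposed residual.
-/

section Frobenius

attribute [local instance] Matrix.frobeniusSeminormedAddCommGroup

theorem frobNorm_eq_norm {m n : ℕ} (A : Matrix (Fin m) (Fin n) ℝ) : frobNorm A = ‖A‖ := by
  rw [Matrix.frobenius_norm_def, frobNorm, Real.sqrt_eq_rpow]
  simp [Real.norm_eq_abs, sq_abs]

theorem frobNorm_nonneg {m n : ℕ} (A : Matrix (Fin m) (Fin n) ℝ) : 0 ≤ frobNorm A :=
  Real.sqrt_nonneg _

theorem frobNorm_transpose {m n : ℕ} (A : Matrix (Fin m) (Fin n) ℝ) :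
    frobNorm Aᵀ = frobNorm A := by
  rw [frobNorm_eq_norm, frobNorm_eq_norm, Matrix.frobenius_norm_transpose]

theorem frobNorm_mul_transpose_sub_mul_transpose_le {n₁ n₂ r : ℕ}
    (X X₀ : Matrix (Fin n₁) (Fin r) ℝ) (Y Y₀ : Matrix (Fin n₂) (Fin r) ℝ) :
    frobNorm (X * Yᵀ - X₀ * Y₀ᵀ) ≤
      frobNorm ((X - X₀) * Yᵀ) + frobNorm (X * (Y - Y₀)ᵀ) + frobNorm (X - X₀) * frobNorm (Y - Y₀) := by
  have hsplit : X * Yᵀ - X₀ * Y₀ᵀ = (X - X₀) * Yᵀ + X * (Y - Y₀)ᵀ - (X - X₀) * (Y - Y₀)ᵀ := by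
    simp only [transpose_sub, Matrix.sub_mul, Matrix.mul_sub]
    abel
  simp only [frobNorm_eq_norm]
  rw [hsplit]
  calc ‖(X - X₀) * Yᵀ + X * (Y - Y₀)ᵀ - (X - X₀) * (Y - Y₀)ᵀ‖
      ≤ ‖(X - X₀) * Yᵀ‖ + ‖X * (Y - Y₀)ᵀ‖ + ‖(X - X₀) * (Y - Y₀)ᵀ‖ :=
        (norm_sub_le _ _).trans (by gcongr; exact norm_add_le _ _)
    _ ≤ ‖(X - X₀) * Yᵀ‖ + ‖X * (Y - Y₀)ᵀ‖ + ‖X - X₀‖ * ‖Y - Y₀‖ := by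
        gcongr
        exact (Matrix.frobenius_norm_mul _ _).trans_eq (by rw [Matrix.frobenius_norm_transpose])

end Frobenius

section Spectral

open scoped Matrix.Norms.L2Operator

theorem specNorm_eq_norm {m n : ℕ} (A : Matrix (Fin m) (Fin n) ℝ) : specNorm A = ‖A‖ := rfl

theorem specNorm_nonneg {m n : ℕ} (A : Matrix (Fin m) (Fin n) ℝ) : 0 ≤ specNorm A :=
  norm_nonneg _

theorem specNorm_transpose {m n : ℕ} (A : Matrix (Fin m) (Fin n) ℝ) :
    specNorm Aᵀ = specNorm A :=
  Matrix.l2_opNorm_conjTranspose A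

theorem sum_sq_mulVec_le {m n : ℕ} (A : Matrix (Fin m) (Fin n) ℝ) (v : Fin n → ℝ) :
    ∑ i, (A *ᵥ v) i ^ 2 ≤ specNorm A ^ 2 * ∑ j, v j ^ 2 := by
  have h := Matrix.l2_opNorm_mulVec A (WithLp.toLp 2 v)
  rw [← specNorm_eq_norm] at h
  have hsq := pow_le_pow_left₀ (norm_nonneg _) h 2
  rwa [mul_pow, EuclideanSpace.real_norm_sq_eq, EuclideanSpace.real_norm_sq_eq] at hsq

theorem frobNorm_mul_le_frobNorm_mul_specNorm {l m n : ℕ} (A : Matrix (Fin l) (Fin m) ℝ)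
    (B : Matrix (Fin m) (Fin n) ℝ) : frobNorm (A * B) ≤ frobNorm A * specNorm B := by
  have hrows : ∑ i, ∑ j, (A * B) i j ^ 2 ≤ specNorm B ^ 2 * ∑ i, ∑ k, A i k ^ 2 := by
    rw [Finset.mul_sum]
    refine Finset.sum_le_sum fun i _ => ?_
    have hrow : ∀ j, (A * B) i j = (Bᵀ *ᵥ A i) j := fun j => by
      simp [Matrix.mul_apply, Matrix.mulVec, dotProduct, mul_comm]
    simpa only [hrow, specNorm_transpose] using sum_sq_mulVec_le Bᵀ (A i)
  calc frobNorm (A * B) ≤ √(specNorm B ^ 2 * ∑ i, ∑ k, A i k ^ 2) := Real.sqrt_le_sqrt hrows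
    _ = frobNorm A * specNorm B := by
        rw [Real.sqrt_mul (sq_nonneg _), Real.sqrt_sq (specNorm_nonneg B), mul_comm, frobNorm]

theorem specNorm_le_add_specNorm_sub {m n : ℕ} (A B : Matrix (Fin m) (Fin n) ℝ) :
    specNorm A ≤ specNorm B + specNorm (A - B) :=
  norm_le_norm_add_norm_sub' A B

end Spectral

theorem frobNorm_mul_le_of_specNorm_sub_le {l m n : ℕ} (A : Matrix (Fin l) (Fin m) ℝ)
    {B B₀ : Matrix (Fin m) (Fin n) ℝ} (h : specNorm (B - B₀) ≤ specNorm B₀ / 4) :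
    frobNorm (A * B) ≤ 3 / 2 * specNorm B₀ * frobNorm A := by
  have hB : specNorm B ≤ 3 / 2 * specNorm B₀ := by
    linarith [specNorm_le_add_specNorm_sub B B₀, specNorm_nonneg B₀]
  calc frobNorm (A * B) ≤ frobNorm A * specNorm B := frobNorm_mul_le_frobNorm_mul_specNorm A B
    _ ≤ frobNorm A * (3 / 2 * specNorm B₀) := by gcongr; exact frobNorm_nonneg A
    _ = 3 / 2 * specNorm B₀ * frobNorm A := mul_comm _ _

theorem mul_diagonal_mul_transpose_eq_sqrt {m n r : Type*} [Fintype r] [DecidableEq r]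
    (U : Matrix m r ℝ) (V : Matrix n r ℝ) {d : r → ℝ} (hd : ∀ i, 0 ≤ d i) :
    U * diagonal d * Vᵀ =
      (U * diagonal fun i => √(d i)) * (V * diagonal fun i => √(d i))ᵀ := by
  have hsq : (diagonal fun i => √(d i)) * (diagonal fun i => √(d i)) = diagonal d := by
    rw [diagonal_mul_diagonal]
    exact congrArg diagonal (funext fun i => Real.mul_self_sqrt (hd i))
  rw [transpose_mul, diagonal_transpose, ← hsq]
  simp only [Matrix.mul_assoc]

theorem smoothness_general
    {n₁ n₂ r : ℕ}
    (Ustar : Matrix (Fin n₁) (Fin r) ℝ) (Vstar : Matrix (Fin n₂) (Fin r) ℝ)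
    (d : Fin r → ℝ) (hd : ∀ i, 0 < d i)
    (Mstar : Matrix (Fin n₁) (Fin n₂) ℝ)
    (hM : Mstar = Ustar * Matrix.diagonal d * Vstarᵀ)
    (Xstar : Matrix (Fin n₁) (Fin r) ℝ) (Ystar : Matrix (Fin n₂) (Fin r) ℝ)
    (hXs : Xstar = Ustar * Matrix.diagonal (fun i => Real.sqrt (d i)))
    (hYs : Ystar = Vstar * Matrix.diagonal (fun i => Real.sqrt (d i)))
    (X : Matrix (Fin n₁) (Fin r) ℝ) (Y : Matrix (Fin n₂) (Fin r) ℝ) :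
    (specNorm (Y - Ystar) ≤ specNorm Ystar / 4 →
      frobNorm ((X * Yᵀ - Mstar) * Y) ≤
        (3 / 2) * specNorm Ystar *
          (frobNorm ((X - Xstar) * Yᵀ) + frobNorm (X * (Y - Ystar)ᵀ) +
            frobNorm (X - Xstar) * frobNorm (Y - Ystar))) ∧
    (specNorm (X - Xstar) ≤ specNorm Xstar / 4 →
      frobNorm ((X * Yᵀ - Mstar)ᵀ * X) ≤
        (3 / 2) * specNorm Xstar *
          (frobNorm ((X - Xstar) * Yᵀ) + frobNorm (X * (Y - Ystar)ᵀ) +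
            frobNorm (X - Xstar) * frobNorm (Y - Ystar))) := by
  have hfactor : Mstar = Xstar * Ystarᵀ := by
    rw [hM, hXs, hYs]
    exact mul_diagonal_mul_transpose_eq_sqrt Ustar Vstar fun i => (hd i).le
  have hresidual := frobNorm_mul_transpose_sub_mul_transpose_le X Xstar Y Ystar
  rw [← hfactor] at hresidual
  refine ⟨fun hY => ?_, fun hX => ?_⟩
  · calc frobNorm ((X * Yᵀ - Mstar) * Y)
        ≤ 3 / 2 * specNorm Ystar * frobNorm (X * Yᵀ - Mstar) :=
          frobNorm_mul_le_of_specNorm_sub_le _ hY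
      _ ≤ _ := by grw [hresidual]; linarith [specNorm_nonneg Ystar]
  · calc frobNorm ((X * Yᵀ - Mstar)ᵀ * X)
        ≤ 3 / 2 * specNorm Xstar * frobNorm (X * Yᵀ - Mstar) := by
          simpa only [frobNorm_transpose] using frobNorm_mul_le_of_specNorm_sub_le (X * Yᵀ - Mstar)ᵀ hX
      _ ≤ _ := by grw [hresidual]; linarith [specNorm_nonneg Xstar]

/-- Lemma 4, smoothness: if `‖Y − Y⋆‖ ≤ σ₁(Y⋆)/4` then
`‖(XYᵀ − M⋆)Y‖_F ≤ (3/2)σ₁(Y⋆)(‖(X−X⋆)Yᵀ‖_F + ‖X(Y−Y⋆)ᵀ‖_F + ‖X−X⋆‖_F‖Y−Y⋆‖_F)`,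
and symmetrically for `X`. -/
theorem smoothness
    {n₁ n₂ r : ℕ}
    (Ustar : Matrix (Fin n₁) (Fin r) ℝ) (Vstar : Matrix (Fin n₂) (Fin r) ℝ)
    (d : Fin r → ℝ) (hd : ∀ i, 0 < d i)
    (hU : Ustarᵀ * Ustar = 1) (hV : Vstarᵀ * Vstar = 1)
    (Mstar : Matrix (Fin n₁) (Fin n₂) ℝ)
    (hM : Mstar = Ustar * Matrix.diagonal d * Vstarᵀ)
    (Xstar : Matrix (Fin n₁) (Fin r) ℝ) (Ystar : Matrix (Fin n₂) (Fin r) ℝ)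
    (hXs : Xstar = Ustar * Matrix.diagonal (fun i => Real.sqrt (d i)))
    (hYs : Ystar = Vstar * Matrix.diagonal (fun i => Real.sqrt (d i)))
    (X : Matrix (Fin n₁) (Fin r) ℝ) (Y : Matrix (Fin n₂) (Fin r) ℝ) :
    (specNorm (Y - Ystar) ≤ specNorm Ystar / 4 →
      frobNorm ((X * Yᵀ - Mstar) * Y) ≤
        (3 / 2) * specNorm Ystar *
          (frobNorm ((X - Xstar) * Yᵀ) + frobNorm (X * (Y - Ystar)ᵀ) +
            frobNorm (X - Xstar) * frobNorm (Y - Ystar))) ∧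
    (specNorm (X - Xstar) ≤ specNorm Xstar / 4 →
      frobNorm ((X * Yᵀ - Mstar)ᵀ * X) ≤
        (3 / 2) * specNorm Xstar *
          (frobNorm ((X - Xstar) * Yᵀ) + frobNorm (X * (Y - Ystar)ᵀ) +
            frobNorm (X - Xstar) * frobNorm (Y - Ystar))) :=
  smoothness_general Ustar Vstar d hd Mstar hM Xstar Ystar hXs hYs X Y
end

section
/- Suppose Z = [X; Y] ∈ ℝ^{(n₁+n₂)×r} is aligned with Z⋆, i.e., the identity matrix I_r is a minimizer of ‖XP − X⋆‖_F² + ‖YP⁻ᵀ − Y⋆‖_F² over invertible P ∈ ℝ^{r×r}. Then, writing E_x = X − X⋆, the following exact identity holds: ⟨X − X⋆, (XYᵀ − M⋆)Y⟩ = ‖Y E_xᵀ‖_F² + ‖Xᵀ E_x‖_F² − Tr(Xᵀ E_x E_xᵀ E_x). -/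
open Matrix BigOperators

/-! Alignment says that `P = 1` minimizes `‖XP − X⋆‖_F² + ‖YP⁻ᵀ − Y⋆‖_F²`, so the derivative
along `P = exp (t • S)` vanishes at `t = 0` for every `S`; this is the balancing identity
`Xᵀ E_x = E_yᵀ Y` with `E_y = Y − Y⋆`. Since `M⋆ = X⋆ Y⋆ᵀ`, the balancing identity turns
`(XYᵀ − M⋆) Y` into `X Xᵀ E_x + E_x YᵀY − E_x Xᵀ E_x`, and pairing with `E_x` and cycling
traces gives the three terms. -/

def IsAligned {n₁ n₂ r : ℕ} (X Xs : Matrix (Fin n₁) (Fin r) ℝ)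
    (Y Ys : Matrix (Fin n₂) (Fin r) ℝ) : Prop :=
  ∀ P : Matrix (Fin r) (Fin r) ℝ, IsUnit P →
    (frobNorm (X - Xs)) ^ 2 + (frobNorm (Y - Ys)) ^ 2 ≤
      (frobNorm (X * P - Xs)) ^ 2 + (frobNorm (Y * (P⁻¹)ᵀ - Ys)) ^ 2

section MatInner

variable {m n : ℕ}

theorem matInner_eq_sum (A B : Matrix (Fin m) (Fin n) ℝ) :
    matInner A B = ∑ i, ∑ j, A i j * B i j := by
  simp only [matInner, trace, diag, mul_apply, transpose_apply]
  rw [Finset.sum_comm]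
  simp only [mul_comm]

theorem frobNorm_sq (A : Matrix (Fin m) (Fin n) ℝ) : frobNorm A ^ 2 = matInner A A := by
  rw [frobNorm, Real.sq_sqrt (by positivity), matInner_eq_sum]
  simp only [sq]

theorem matInner_neg_right (A B : Matrix (Fin m) (Fin n) ℝ) :
    matInner A (-B) = -matInner A B := by
  simp only [matInner, transpose_neg, Matrix.neg_mul, trace_neg]

theorem matInner_sub_left (A B C : Matrix (Fin m) (Fin n) ℝ) :
    matInner (A - B) C = matInner A C - matInner B C := by
  simp only [matInner, Matrix.mul_sub, trace_sub]

theorem matInner_mul_right {k : ℕ} (A : Matrix (Fin m) (Fin n) ℝ) (B : Matrix (Fin m) (Fin k) ℝ)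
    (C : Matrix (Fin k) (Fin n) ℝ) : matInner A (B * C) = matInner (Bᵀ * A) C := by
  simp only [matInner, transpose_mul, Matrix.mul_assoc]

theorem matInner_mul_transpose_right {k : ℕ} (A : Matrix (Fin m) (Fin n) ℝ)
    (B : Matrix (Fin m) (Fin k) ℝ) (C : Matrix (Fin n) (Fin k) ℝ) :
    matInner A (B * Cᵀ) = matInner (Aᵀ * B) C := by
  rw [matInner, matInner, transpose_mul, transpose_transpose, Matrix.mul_assoc, trace_mul_comm,
    ← trace_transpose]
  simp only [transpose_mul, transpose_transpose, Matrix.mul_assoc]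

theorem eq_zero_of_forall_matInner_eq_zero {G : Matrix (Fin m) (Fin n) ℝ}
    (h : ∀ S, matInner G S = 0) : G = 0 := by
  have hG := h G
  rwa [matInner, ← conjTranspose_eq_transpose_of_trivial,
    trace_conjTranspose_mul_self_eq_zero_iff] at hG

theorem HasDerivAt.frobNorm_sq {M : ℝ → Matrix (Fin m) (Fin n) ℝ}
    {M' : Matrix (Fin m) (Fin n) ℝ} {t : ℝ}
    (hM : ∀ i j, HasDerivAt (fun s => M s i j) (M' i j) t) :
    HasDerivAt (fun s => frobNorm (M s) ^ 2) (2 * matInner (M t) M') t := by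
  simp only [_root_.frobNorm_sq, matInner_eq_sum, Finset.mul_sum]
  exact HasDerivAt.fun_sum fun i _ => HasDerivAt.fun_sum fun j _ =>
    ((hM i j).fun_mul (hM i j)).congr_deriv (by ring)

end MatInner

section Exponential

attribute [local instance] Matrix.linftyOpNormedRing Matrix.linftyOpNormedAlgebra

open NormedSpace

variable {m r : ℕ}

theorem hasDerivAt_exp_smul_apply_zero (S : Matrix (Fin r) (Fin r) ℝ) (k l : Fin r) :
    HasDerivAt (fun t : ℝ => exp (t • S) k l) (S k l) 0 := by
  have h := hasDerivAt_exp_smul_const' (𝕂 := ℝ) S 0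
  rw [zero_smul, exp_zero, mul_one] at h
  exact hasDerivAt_pi.1 (hasDerivAt_pi.1 h k) l

theorem hasDerivAt_frobNorm_sq_mul_exp_smul_sub (A B : Matrix (Fin m) (Fin r) ℝ)
    (S : Matrix (Fin r) (Fin r) ℝ) :
    HasDerivAt (fun t : ℝ => frobNorm (A * exp (t • S) - B) ^ 2)
      (2 * matInner (A - B) (A * S)) 0 := by
  have h := HasDerivAt.frobNorm_sq (M := fun t : ℝ => A * exp (t • S) - B) (M' := A * S)
    (t := 0) fun i j => by
      simp only [Matrix.sub_apply, mul_apply]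
      exact (HasDerivAt.fun_sum fun k _ =>
        (hasDerivAt_exp_smul_apply_zero S k j).const_mul (A i k)).sub_const _
  simpa only [zero_smul, exp_zero, Matrix.mul_one] using h

/-- Differentiate at `t = 0` along the curve `P = exp (t • S)`, whose inverse `exp (-(t • S))`
is again explicit. -/
theorem IsAligned.matInner_eq {n₁ n₂ : ℕ} {X Xs : Matrix (Fin n₁) (Fin r) ℝ}
    {Y Ys : Matrix (Fin n₂) (Fin r) ℝ} (h : IsAligned X Xs Y Ys) (S : Matrix (Fin r) (Fin r) ℝ) :
    matInner (X - Xs) (X * S) = matInner (Y - Ys) (Y * Sᵀ) := by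
  have hinv : ∀ t : ℝ, ((exp (t • S))⁻¹)ᵀ = exp (t • -Sᵀ) := fun t => by
    rw [← Matrix.exp_neg, ← Matrix.exp_transpose, transpose_neg, transpose_smul, smul_neg]
  have hmin : IsLocalMin (fun t : ℝ => frobNorm (X * exp (t • S) - Xs) ^ 2 +
      frobNorm (Y * exp (t • -Sᵀ) - Ys) ^ 2) 0 :=
    Filter.Eventually.of_forall fun t => by
      have ht := h _ (Matrix.isUnit_exp (t • S))
      rw [hinv] at ht
      simpa only [zero_smul, exp_zero, Matrix.mul_one] using ht
  have hderiv := hmin.hasDerivAt_eq_zero ((hasDerivAt_frobNorm_sq_mul_exp_smul_sub X Xs S).add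
    (hasDerivAt_frobNorm_sq_mul_exp_smul_sub Y Ys (-Sᵀ)))
  rw [Matrix.mul_neg, matInner_neg_right] at hderiv
  linarith

end Exponential

theorem IsAligned.transpose_mul_sub_eq {n₁ n₂ r : ℕ} {X Xs : Matrix (Fin n₁) (Fin r) ℝ}
    {Y Ys : Matrix (Fin n₂) (Fin r) ℝ} (h : IsAligned X Xs Y Ys) :
    Xᵀ * (X - Xs) = (Y - Ys)ᵀ * Y := by
  rw [← sub_eq_zero]
  refine eq_zero_of_forall_matInner_eq_zero fun S => ?_
  rw [matInner_sub_left, ← matInner_mul_right, ← matInner_mul_transpose_right, h.matInner_eq,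
    sub_self]

section Algebra

variable {m n k R : Type*} [Fintype m] [Fintype n] [Fintype k] [CommRing R]

theorem residual_mul_eq_of_transpose_mul_sub_eq {X Xs : Matrix m k R} {Y Ys : Matrix n k R}
    (h : Xᵀ * (X - Xs) = (Y - Ys)ᵀ * Y) :
    (X * Yᵀ - Xs * Ysᵀ) * Y =
      X * (Xᵀ * (X - Xs)) + (X - Xs) * (Yᵀ * Y) - (X - Xs) * (Xᵀ * (X - Xs)) := by
  rw [h]
  simp only [transpose_sub, Matrix.sub_mul, Matrix.mul_sub, Matrix.mul_assoc]
  abel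

theorem trace_residual_mul_transpose_mul_eq {X Xs : Matrix m k R} {Y Ys : Matrix n k R}
    (h : Xᵀ * (X - Xs) = (Y - Ys)ᵀ * Y) :
    trace (((X * Yᵀ - Xs * Ysᵀ) * Y)ᵀ * (X - Xs)) =
      trace ((Y * (X - Xs)ᵀ)ᵀ * (Y * (X - Xs)ᵀ)) + trace ((Xᵀ * (X - Xs))ᵀ * (Xᵀ * (X - Xs))) -
        trace (Xᵀ * (X - Xs) * (X - Xs)ᵀ * (X - Xs)) := by
  set E := X - Xs
  rw [residual_mul_eq_of_transpose_mul_sub_eq h, transpose_sub, transpose_add, Matrix.sub_mul,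
    Matrix.add_mul, trace_sub, trace_add]
  have hX : trace ((X * (Xᵀ * E))ᵀ * E) = trace ((Xᵀ * E)ᵀ * (Xᵀ * E)) := by
    rw [transpose_mul, Matrix.mul_assoc]
  have hY : trace ((E * (Yᵀ * Y))ᵀ * E) = trace ((Y * Eᵀ)ᵀ * (Y * Eᵀ)) := by
    simp only [transpose_mul, transpose_transpose, Matrix.mul_assoc]
    rw [trace_mul_comm E]
    simp only [Matrix.mul_assoc]
  have hE : trace ((E * (Xᵀ * E))ᵀ * E) = trace (Xᵀ * E * Eᵀ * E) := by
    rw [← trace_transpose]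
    simp only [transpose_mul, transpose_transpose, Matrix.mul_assoc]
    rw [trace_mul_comm Eᵀ]
    simp only [Matrix.mul_assoc]
    rw [trace_mul_comm E]
    simp only [Matrix.mul_assoc]
  rw [hX, hY, hE]
  abel

end Algebra

theorem mul_diagonal_sqrt_mul_transpose {m n k : Type*} [Fintype k] [DecidableEq k]
    (U : Matrix m k ℝ) (V : Matrix n k ℝ) {d : k → ℝ} (hd : ∀ i, 0 ≤ d i) :
    U * diagonal (fun i => √(d i)) * (V * diagonal (fun i => √(d i)))ᵀ = U * diagonal d * Vᵀ := by
  rw [transpose_mul, diagonal_transpose, Matrix.mul_assoc, ← Matrix.mul_assoc (diagonal _),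
    diagonal_mul_diagonal, ← Matrix.mul_assoc]
  simp only [Real.mul_self_sqrt (hd _)]

theorem gradient_dominance_exact_identity_general
    {n₁ n₂ r : ℕ}
    (Ustar : Matrix (Fin n₁) (Fin r) ℝ) (Vstar : Matrix (Fin n₂) (Fin r) ℝ)
    (d : Fin r → ℝ) (hd : ∀ i, 0 < d i)
    (Mstar : Matrix (Fin n₁) (Fin n₂) ℝ)
    (hM : Mstar = Ustar * Matrix.diagonal d * Vstarᵀ)
    (Xstar : Matrix (Fin n₁) (Fin r) ℝ) (Ystar : Matrix (Fin n₂) (Fin r) ℝ)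
    (hXs : Xstar = Ustar * Matrix.diagonal (fun i => Real.sqrt (d i)))
    (hYs : Ystar = Vstar * Matrix.diagonal (fun i => Real.sqrt (d i)))
    (X : Matrix (Fin n₁) (Fin r) ℝ) (Y : Matrix (Fin n₂) (Fin r) ℝ)
    (haligned : ∀ P : Matrix (Fin r) (Fin r) ℝ, IsUnit P →
      (frobNorm (X - Xstar)) ^ 2 + (frobNorm (Y - Ystar)) ^ 2 ≤
        (frobNorm (X * P - Xstar)) ^ 2 + (frobNorm (Y * (P⁻¹)ᵀ - Ystar)) ^ 2) :
    matInner (X - Xstar) ((X * Yᵀ - Mstar) * Y) =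
      (frobNorm (Y * (X - Xstar)ᵀ)) ^ 2 + (frobNorm (Xᵀ * (X - Xstar))) ^ 2 -
        Matrix.trace (Xᵀ * (X - Xstar) * (X - Xstar)ᵀ * (X - Xstar)) := by
  have hMstar : Mstar = Xstar * Ystarᵀ := by
    rw [hM, hXs, hYs, mul_diagonal_sqrt_mul_transpose _ _ fun i => (hd i).le]
  rw [hMstar, frobNorm_sq, frobNorm_sq, matInner, matInner, matInner]
  exact trace_residual_mul_transpose_mul_eq (IsAligned.transpose_mul_sub_eq haligned)

/-- exact expansion in the proof of Lemma 3: if `Z = [X; Y]` is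
aligned with `Z⋆`, then with `E_x = X − X⋆`,
`⟨X − X⋆, (XYᵀ − M⋆)Y⟩ = ‖Y E_xᵀ‖_F² + ‖Xᵀ E_x‖_F² − Tr(Xᵀ E_x E_xᵀ E_x)`. -/
theorem gradient_dominance_exact_identity
    {n₁ n₂ r : ℕ}
    (Ustar : Matrix (Fin n₁) (Fin r) ℝ) (Vstar : Matrix (Fin n₂) (Fin r) ℝ)
    (d : Fin r → ℝ) (hd : ∀ i, 0 < d i)
    (hU : Ustarᵀ * Ustar = 1) (hV : Vstarᵀ * Vstar = 1)
    (Mstar : Matrix (Fin n₁) (Fin n₂) ℝ)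
    (hM : Mstar = Ustar * Matrix.diagonal d * Vstarᵀ)
    (Xstar : Matrix (Fin n₁) (Fin r) ℝ) (Ystar : Matrix (Fin n₂) (Fin r) ℝ)
    (hXs : Xstar = Ustar * Matrix.diagonal (fun i => Real.sqrt (d i)))
    (hYs : Ystar = Vstar * Matrix.diagonal (fun i => Real.sqrt (d i)))
    (X : Matrix (Fin n₁) (Fin r) ℝ) (Y : Matrix (Fin n₂) (Fin r) ℝ)
    (haligned : ∀ P : Matrix (Fin r) (Fin r) ℝ, IsUnit P →
      (frobNorm (X - Xstar)) ^ 2 + (frobNorm (Y - Ystar)) ^ 2 ≤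
        (frobNorm (X * P - Xstar)) ^ 2 + (frobNorm (Y * (P⁻¹)ᵀ - Ystar)) ^ 2) :
    matInner (X - Xstar) ((X * Yᵀ - Mstar) * Y) =
      (frobNorm (Y * (X - Xstar)ᵀ)) ^ 2 + (frobNorm (Xᵀ * (X - Xstar))) ^ 2 -
        Matrix.trace (Xᵀ * (X - Xstar) * (X - Xstar)ᵀ * (X - Xstar)) :=
  gradient_dominance_exact_identity_general Ustar Vstar d hd Mstar hM Xstar Ystar hXs hYs X Y
    haligned
end
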